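/- For fixed h ≥ 1, the leaf density d_leaf(r) = r^h(r-1)/(r^{h+1}-1) is strictly increasing in r for integers r ≥ 2. -/
import Mathlib

lemma key_ineq (x y : ℝ) (hx : 2 ≤ x) (hxy : x < y) :
    ∀ h : ℕ, 1 ≤ h → y ^ h * (y - 1) - x ^ h * (x - 1) < x ^ h * y ^ h * (y - x) := by
  intro h hh
  induction h, hh using Nat.le_induction with
  | base =>
    simp only [pow_one]
    nlinarith [mul_pos (mul_pos (show (0:ℝ) < y - x by linarith)
      (show (0:ℝ) < x - 1 by linarith)) (show (0:ℝ) < y - 1 by linarith)]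
  | succ n hn ih =>
    have hy1 : (1:ℝ) ≤ y ^ (n+1) := one_le_pow₀ (by linarith)
    have h1 : y * (y ^ n * (y - 1) - x ^ n * (x - 1)) < y * (x ^ n * y ^ n * (y - x)) := by
      have hy : 0 < y := by linarith
      exact (mul_lt_mul_iff_right₀ hy).mpr ih
    have hxp : (0:ℝ) < x ^ n := pow_pos (by linarith) n
    have h2 : x ^ n * (x - 1) * (y - x) ≤ x ^ n * (x - 1) * (y ^ (n+1)) * (y - x) := by
      nlinarith [mul_pos hxp (show (0:ℝ) < (x-1)*(y-x) by nlinarith)]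
    calc y ^ (n+1) * (y - 1) - x ^ (n+1) * (x - 1)
        = y * (y ^ n * (y - 1) - x ^ n * (x - 1)) + x ^ n * (x - 1) * (y - x) := by ring
      _ < y * (x ^ n * y ^ n * (y - x)) + x ^ n * (x - 1) * (y ^ (n+1)) * (y - x) := by
          linarith
      _ ≤ x ^ (n+1) * y ^ (n+1) * (y - x) := by
          have : y * (x ^ n * y ^ n * (y - x)) + x ^ n * (x - 1) * (y ^ (n+1)) * (y - x)
              = x ^ n * (y - x) * (y ^ (n+1) + (x - 1) * y ^ (n+1)) := by ring
          rw [this, pow_succ x n, pow_succ y n]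
          have : x ^ n * x * (y ^ n * y) * (y - x) = x ^ n * (y - x) * (x * y ^ (n+1)) := by
            rw [pow_succ y n]; ring
          rw [this]
          have hmul : (0:ℝ) < x ^ n * (y - x) := mul_pos hxp (by linarith)
          apply mul_le_mul_of_nonneg_left _ hmul.le
          nlinarith
  
theorem leaf_density_strict_mono (h : ℕ) (hh : 1 ≤ h) :
    ∀ r₁ r₂ : ℕ, 2 ≤ r₁ → r₁ < r₂ →
      (r₁ : ℝ) ^ h * ((r₁ : ℝ) - 1) / ((r₁ : ℝ) ^ (h + 1) - 1) <
      (r₂ : ℝ) ^ h * ((r₂ : ℝ) - 1) / ((r₂ : ℝ) ^ (h + 1) - 1) := by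
  intro r₁ r₂ hr1 hr12
  have hx : (2:ℝ) ≤ (r₁:ℝ) := by exact_mod_cast hr1
  have hxy : (r₁:ℝ) < (r₂:ℝ) := by exact_mod_cast hr12
  set x : ℝ := (r₁ : ℝ)
  set y : ℝ := (r₂ : ℝ)
  have hx1 : 1 < x := by linarith
  have hy1 : 1 < y := by linarith
  have d1 : (0:ℝ) < x ^ (h+1) - 1 := by
    have : (1:ℝ) < x ^ (h+1) := one_lt_pow₀ hx1 (by omega)
    linarith
  have d2 : (0:ℝ) < y ^ (h+1) - 1 := by
    have : (1:ℝ) < y ^ (h+1) := one_lt_pow₀ hy1 (by omega)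
    linarith
  rw [div_lt_div_iff₀ d1 d2, pow_succ x h, pow_succ y h]
  have hk := key_ineq x y hx hxy h hh
  ring_nf at hk ⊢
  linarith
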